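/- arXiv:2401.16417 — 7 statements merged into one kernel-verified Lean document; each statement's English description precedes it below -/
import Mathlib

section
/- For any real-valued random variable X (on a probability space), the limit as x → ∞ of (1/x)·log E[Φ(X − x)] + x/2 equals the essential supremum of X, where Φ is the standard Gaussian CDF. (If the essential supremum is +∞, the limit is +∞.) -/
/-!
Write `I(x) = E[Φ(X - x)]`. If `X ≤ c` almost surely, then `I(x) ≤ Φ(c - x)` and the Chernoff
bound for the standard Gaussian gives `log I(x) ≤ -(x - c)²/2`. If `P(X > a) = p > 0`, then
`I(x) ≥ p Φ(a - x) ≥ p ε φ(a - x - ε)`, since `φ` increases on `(-∞, 0]`, so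
`log I(x) ≥ K - (x - (a - ε))²/2`. In both cases `(1/x)(K - (x - b)²/2) + x/2 → b`, which
squeezes the limit between every `a` below and every `c` above the essential supremum.
-/

open MeasureTheory Filter

/-- Standard Gaussian density. -/
noncomputable def gaussPDF (x : ℝ) : ℝ := Real.exp (-(x ^ 2) / 2) / Real.sqrt (2 * Real.pi)

/-- Standard Gaussian CDF. -/
noncomputable def gaussCDF (x : ℝ) : ℝ := ∫ t in Set.Iic x, gaussPDF t

open ProbabilityTheory Real Topology

lemma gaussPDF_eq_gaussianPDFReal : gaussPDF = gaussianPDFReal 0 1 := by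
  ext x
  simp [gaussPDF, gaussianPDFReal, div_eq_inv_mul]

lemma gaussPDF_pos (x : ℝ) : 0 < gaussPDF x := by
  unfold gaussPDF; positivity

lemma integrable_gaussPDF : Integrable gaussPDF :=
  gaussPDF_eq_gaussianPDFReal ▸ integrable_gaussianPDFReal 0 1

lemma gaussCDF_eq_cdf : gaussCDF = cdf (gaussianReal 0 1) := by
  ext x
  rw [cdf_eq_real, measureReal_def, gaussianReal_apply_eq_integral _ one_ne_zero,
    ENNReal.toReal_ofReal (setIntegral_nonneg measurableSet_Iic fun t _ ↦
      gaussianPDFReal_nonneg _ _ t), gaussCDF, gaussPDF_eq_gaussianPDFReal]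

lemma gaussCDF_le_one (x : ℝ) : gaussCDF x ≤ 1 := gaussCDF_eq_cdf ▸ cdf_le_one _ x

lemma monotone_gaussCDF : Monotone gaussCDF := gaussCDF_eq_cdf ▸ monotone_cdf _

lemma gaussCDF_pos (x : ℝ) : 0 < gaussCDF x := by
  rw [gaussCDF_eq_cdf, cdf_eq_real]
  refine ENNReal.toReal_pos ?_ (measure_ne_top _ _)
  exact fun h ↦ by simpa using gaussianReal_absolutelyContinuous' 0 one_ne_zero h

lemma gaussCDF_nonneg (x : ℝ) : 0 ≤ gaussCDF x := (gaussCDF_pos x).le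

lemma gaussCDF_neg_le_exp {t : ℝ} (ht : 0 ≤ t) : gaussCDF (-t) ≤ exp (-t ^ 2 / 2) := by
  have h := measure_le_le_exp_mul_mgf (X := id) (μ := gaussianReal 0 1) (-t) (neg_nonpos.2 ht)
    (integrable_exp_mul_gaussianReal (-t))
  rw [mgf_id_gaussianReal, ← exp_add] at h
  rw [gaussCDF_eq_cdf, cdf_eq_real]
  convert h using 2
  · rfl
  · push_cast; ring

lemma mul_gaussPDF_sub_le_gaussCDF {y ε : ℝ} (hy : y ≤ 0) (hε : 0 ≤ ε) :
    ε * gaussPDF (y - ε) ≤ gaussCDF y := by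
  have hint : IntegrableOn gaussPDF (Set.Iic y) := integrable_gaussPDF.integrableOn
  have hmono : ∀ s ∈ Set.Ioc (y - ε) y, gaussPDF (y - ε) ≤ gaussPDF s := by
    rintro s ⟨hs₁, hs₂⟩
    exact div_le_div_of_nonneg_right (exp_le_exp.2 (by nlinarith)) (sqrt_nonneg _)
  calc ε * gaussPDF (y - ε) = ∫ _ in Set.Ioc (y - ε) y, gaussPDF (y - ε) := by
        simp [measureReal_def, hε]
    _ ≤ ∫ s in Set.Ioc (y - ε) y, gaussPDF s :=
        setIntegral_mono_on (integrableOn_const (by simp)) (hint.mono_set fun s hs ↦ hs.2)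
          measurableSet_Ioc hmono
    _ ≤ gaussCDF y :=
        setIntegral_mono_set hint (ae_of_all _ fun t ↦ (gaussPDF_pos t).le)
          Set.Ioc_subset_Iic_self.eventuallyLE

lemma tendsto_inv_mul_sub_sq_add_half (K a : ℝ) :
    Tendsto (fun x : ℝ ↦ 1 / x * (K - (x - a) ^ 2 / 2) + x / 2) atTop (𝓝 a) := by
  have h : Tendsto (fun x : ℝ ↦ (K - a ^ 2 / 2) * x⁻¹ + a) atTop (𝓝 a) := by
    simpa using (tendsto_inv_atTop_zero.const_mul (K - a ^ 2 / 2)).add_const a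
  refine h.congr' ?_
  filter_upwards [eventually_gt_atTop 0] with x hx
  field_simp
  ring

lemma eventually_lt_inv_mul_add_half {L : ℝ → ℝ} {K a m : ℝ} (hm : m < a)
    (hL : ∀ᶠ x in atTop, K - (x - a) ^ 2 / 2 ≤ L x) :
    ∀ᶠ x in atTop, m < 1 / x * L x + x / 2 := by
  filter_upwards [(tendsto_inv_mul_sub_sq_add_half K a).eventually (eventually_gt_nhds hm), hL,
    eventually_gt_atTop 0] with x hlim hLx hx
  calc m < 1 / x * (K - (x - a) ^ 2 / 2) + x / 2 := hlim
    _ ≤ 1 / x * L x + x / 2 := by gcongr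

lemma eventually_inv_mul_add_half_lt {L : ℝ → ℝ} {K a m : ℝ} (hm : a < m)
    (hL : ∀ᶠ x in atTop, L x ≤ K - (x - a) ^ 2 / 2) :
    ∀ᶠ x in atTop, 1 / x * L x + x / 2 < m := by
  filter_upwards [(tendsto_inv_mul_sub_sq_add_half K a).eventually (eventually_lt_nhds hm), hL,
    eventually_gt_atTop 0] with x hlim hLx hx
  calc 1 / x * L x + x / 2 ≤ 1 / x * (K - (x - a) ^ 2 / 2) + x / 2 := by gcongr
    _ < m := hlim

section Expectation

variable {Ω : Type*} [MeasurableSpace Ω] {μ : Measure Ω}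

lemma integrable_gaussCDF_comp [IsFiniteMeasure μ] {f : Ω → ℝ} (hf : AEMeasurable f μ) :
    Integrable (fun ω ↦ gaussCDF (f ω)) μ :=
  (integrable_const 1).mono'
    (monotone_gaussCDF.measurable.comp_aemeasurable hf).aestronglyMeasurable
    (ae_of_all _ fun ω ↦ by rw [norm_of_nonneg (gaussCDF_nonneg _)]; exact gaussCDF_le_one _)

lemma integral_gaussCDF_comp_pos [IsFiniteMeasure μ] [NeZero μ] {f : Ω → ℝ}
    (hf : AEMeasurable f μ) : 0 < ∫ ω, gaussCDF (f ω) ∂μ := by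
  rw [integral_pos_iff_support_of_nonneg (fun ω ↦ gaussCDF_nonneg _)
    (integrable_gaussCDF_comp hf)]
  simp [Function.support, (gaussCDF_pos _).ne', NeZero.ne μ]

variable [IsProbabilityMeasure μ] {X : Ω → ℝ}

lemma integral_gaussCDF_sub_le {c : ℝ} (hX : AEMeasurable X μ) (hc : ∀ᵐ ω ∂μ, X ω ≤ c)
    (x : ℝ) :
    ∫ ω, gaussCDF (X ω - x) ∂μ ≤ gaussCDF (c - x) := by
  calc ∫ ω, gaussCDF (X ω - x) ∂μ ≤ ∫ _, gaussCDF (c - x) ∂μ :=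
        integral_mono_ae (integrable_gaussCDF_comp (hX.sub_const x)) (integrable_const _)
          (hc.mono fun ω hω ↦ monotone_gaussCDF (by linarith))
    _ = gaussCDF (c - x) := by simp

lemma measureReal_mul_gaussCDF_sub_le (hX : Measurable X) (a x : ℝ) :
    μ.real {ω | a < X ω} * gaussCDF (a - x) ≤ ∫ ω, gaussCDF (X ω - x) ∂μ := by
  have hs : MeasurableSet {ω | a < X ω} := measurableSet_lt measurable_const hX
  rw [← smul_eq_mul, ← integral_indicator_const _ hs]
  refine integral_mono ((integrable_const _).indicator hs)
    (integrable_gaussCDF_comp (hX.sub_const x).aemeasurable) ?_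
  exact Set.indicator_le' (fun ω hω ↦ monotone_gaussCDF (sub_le_sub_right (le_of_lt hω) x))
    fun _ _ ↦ gaussCDF_nonneg _

lemma log_integral_gaussCDF_sub_le {c x : ℝ} (hX : AEMeasurable X μ)
    (hc : ∀ᵐ ω ∂μ, X ω ≤ c) (hx : c ≤ x) :
    log (∫ ω, gaussCDF (X ω - x) ∂μ) ≤ -(x - c) ^ 2 / 2 := by
  rw [← log_exp (-(x - c) ^ 2 / 2)]
  refine log_le_log (integral_gaussCDF_comp_pos (hX.sub_const x))
    ((integral_gaussCDF_sub_le hX hc x).trans ?_)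
  simpa using gaussCDF_neg_le_exp (sub_nonneg.2 hx)

lemma log_measureReal_mul_div_sub_le_log_integral_gaussCDF {a ε x : ℝ} (hX : Measurable X)
    (ha : μ {ω | a < X ω} ≠ 0) (hε : 0 < ε) (hx : a ≤ x) :
    log (μ.real {ω | a < X ω} * ε / √(2 * π)) - (x - (a - ε)) ^ 2 / 2
      ≤ log (∫ ω, gaussCDF (X ω - x) ∂μ) := by
  set p := μ.real {ω | a < X ω}
  have hp : 0 < p := ENNReal.toReal_pos ha (measure_ne_top _ _)
  have hpdf := gaussPDF_pos (a - x - ε)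
  have hlow : p * (ε * gaussPDF (a - x - ε)) ≤ ∫ ω, gaussCDF (X ω - x) ∂μ :=
    (mul_le_mul_of_nonneg_left (mul_gaussPDF_sub_le_gaussCDF (by linarith) hε.le) hp.le).trans
      (measureReal_mul_gaussCDF_sub_le hX a x)
  calc log (p * ε / √(2 * π)) - (x - (a - ε)) ^ 2 / 2
      = log (p * (ε * gaussPDF (a - x - ε))) := by
        rw [gaussPDF, show p * (ε * (exp (-(a - x - ε) ^ 2 / 2) / √(2 * π)))
            = p * ε / √(2 * π) * exp (-(a - x - ε) ^ 2 / 2) by ring,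
          log_mul (by positivity) (exp_pos _).ne', log_exp]
        ring
    _ ≤ log (∫ ω, gaussCDF (X ω - x) ∂μ) := log_le_log (by positivity) hlow

lemma eventually_lt_inv_mul_log_integral_gaussCDF {a m : ℝ} (hX : Measurable X)
    (ha : μ {ω | a < X ω} ≠ 0) (hm : m < a) :
    ∀ᶠ x in atTop, m < 1 / x * log (∫ ω, gaussCDF (X ω - x) ∂μ) + x / 2 :=
  eventually_lt_inv_mul_add_half (a := a - (a - m) / 2) (by linarith) <|
    (eventually_ge_atTop a).mono fun _ hx ↦
      log_measureReal_mul_div_sub_le_log_integral_gaussCDF hX ha (by linarith) hx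

lemma eventually_inv_mul_log_integral_gaussCDF_lt {c m : ℝ} (hX : AEMeasurable X μ)
    (hc : ∀ᵐ ω ∂μ, X ω ≤ c) (hm : c < m) :
    ∀ᶠ x in atTop, 1 / x * log (∫ ω, gaussCDF (X ω - x) ∂μ) + x / 2 < m :=
  eventually_inv_mul_add_half_lt (K := 0) hm <|
    (eventually_ge_atTop c).mono fun _ hx ↦ by
      simpa [neg_div] using log_integral_gaussCDF_sub_le hX hc hx

end Expectation

/-- For any real random variable `X`,
`(1/x)·log E[Φ(X − x)] + x/2 → ‖X‖_∞` (essential supremum, possibly `+∞`) as `x → ∞`. -/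
theorem stmt0 {Ω : Type*} [MeasurableSpace Ω] (μ : Measure Ω) [IsProbabilityMeasure μ]
    (X : Ω → ℝ) (hX : Measurable X) :
    Tendsto
      (fun x : ℝ =>
        (((1 / x) * Real.log (∫ ω, gaussCDF (X ω - x) ∂μ) + x / 2 : ℝ) : EReal))
      atTop (nhds (essSup (fun ω => (X ω : EReal)) μ)) := by
  refine tendsto_order.2 ⟨fun b hb ↦ ?_, fun b hb ↦ ?_⟩
  · obtain ⟨m, hbm, hm⟩ := EReal.lt_iff_exists_real_btwn.1 hb
    obtain ⟨a, hma, ha⟩ := EReal.lt_iff_exists_real_btwn.1 hm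
    have hpos : μ {ω | a < X ω} ≠ 0 := by
      simpa using frequently_ae_iff.1 (frequently_lt_of_lt_limsup (by isBoundedDefault) ha)
    filter_upwards [eventually_lt_inv_mul_log_integral_gaussCDF hX hpos
      (EReal.coe_lt_coe_iff.1 hma)] with x hx
    exact hbm.trans (EReal.coe_lt_coe_iff.2 hx)
  · obtain ⟨c, hc, hcb⟩ := EReal.lt_iff_exists_real_btwn.1 hb
    obtain ⟨m, hcm, hmb⟩ := EReal.lt_iff_exists_real_btwn.1 hcb
    have hXc : ∀ᵐ ω ∂μ, X ω ≤ c :=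
      (ae_lt_of_essSup_lt hc).mono fun ω h ↦ (EReal.coe_lt_coe_iff.1 h).le
    filter_upwards [eventually_inv_mul_log_integral_gaussCDF_lt hX.aemeasurable hXc
      (EReal.coe_lt_coe_iff.1 hcm)] with x hx
    exact (EReal.coe_lt_coe_iff.2 hx).trans hmb
end

section
/- Let A, B be finite sets, W a channel from A to B, c : A → [0, c_max] a cost function, and C(Γ) the capacity-cost function, which is concave and (on (Γ₀, Γ*)) continuous. Fix Γ ∈ (Γ₀, Γ*) and suppose the capacity-cost-achieving distribution P*[Γ] for cost Γ is unique. Then the set-valued map Γ' ↦ S_{C(Γ')} (the set of capacity-cost-achieving distributions at cost Γ') is upper hemicontinuous at Γ in the following sense: for every ε > 0 there exists δ > 0 such that |Γ' − Γ| < δ implies sup_{P ∈ S_{C(Γ')}} ‖P − P*[Γ]‖₁ < ε. -/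
open scoped BigOperators

/-- The set of probability distributions on a finite alphabet `A`. -/
def probs (A : Type*) [Fintype A] : Set (A → ℝ) :=
  {P | (∀ a, 0 ≤ P a) ∧ ∑ a, P a = 1}

/-- Mutual information `I(P, W)` for an input distribution `P` and channel `W`. -/
noncomputable def mutInfo {A B : Type*} [Fintype A] [Fintype B]
    (P : A → ℝ) (W : A → B → ℝ) : ℝ :=
  ∑ a, ∑ b, P a * W a b * Real.log (W a b / ∑ a', P a' * W a' b)

/-!
Writing `I(P, W) = H(PW) - ∑ₐ P(a) H(W(a))` shows that mutual information is continuous on the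
simplex. A distribution outside a neighbourhood `U` of the achieving set at cost `Γ` either
costs more than `Γ` or has `I(P, W) ≠ C(Γ)`; both are open conditions in `(Γ', P)` because `C`
is continuous at `Γ`, and compactness of the simplex minus `U` makes them hold uniformly for
`Γ'` near `Γ`. Uniqueness of `P*[Γ]` lets `U` be any `ℓ¹`-ball around it.
-/

open Filter Topology Set Finset Real

theorem IsCompact.eventually_sep_subset {X : Type*} [TopologicalSpace X] {K U : Set X}
    (hK : IsCompact K) (hU : IsOpen U) {f g : X → ℝ} (hf : ContinuousOn f K)
    (hg : ContinuousOn g K) {F : ℝ → ℝ} {t₀ : ℝ} (hF : ContinuousAt F t₀)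
    (hsub : {x ∈ K | g x ≤ t₀ ∧ f x = F t₀} ⊆ U) :
    ∀ᶠ t in 𝓝 t₀, {x ∈ K | g x ≤ t ∧ f x = F t} ⊆ U := by
  have hlocal : ∀ y ∈ K \ U, ∀ᶠ z : ℝ × X in 𝓝 (t₀, y),
      z.2 ∈ K → ¬ (g z.2 ≤ z.1 ∧ f z.2 = F z.1) := by
    rintro y ⟨hyK, hyU⟩
    have hopen : IsOpen {p : (ℝ × ℝ) × (ℝ × ℝ) | ¬ (p.1.1 ≤ p.1.2 ∧ p.2.1 = p.2.2)} :=
      ((isClosed_le continuous_fst.fst continuous_fst.snd).inter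
        (isClosed_eq continuous_snd.fst continuous_snd.snd)).isOpen_compl
    have hmaps : MapsTo Prod.snd (univ ×ˢ K : Set (ℝ × X)) K := fun z hz => hz.2
    have hcont : ContinuousWithinAt (fun z : ℝ × X => ((g z.2, z.1), (f z.2, F z.1)))
        (univ ×ˢ K) (t₀, y) :=
      (((hg y hyK).comp continuousWithinAt_snd hmaps).prodMk continuousWithinAt_fst).prodMk
        (((hf y hyK).comp continuousWithinAt_snd hmaps).prodMk
          (hF.comp_continuousWithinAt continuousWithinAt_fst))
    have := mem_nhdsWithin_iff_eventually.mp
      (hcont.preimage_mem_nhdsWithin (hopen.mem_nhds fun h => hyU (hsub ⟨hyK, h⟩)))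
    exact this.mono fun z hz hzK => hz ⟨mem_univ _, hzK⟩
  filter_upwards [(hK.diff hU).eventually_forall_of_forall_eventually
    (P := fun t y => y ∈ K → ¬ (g y ≤ t ∧ f y = F t)) hlocal] with t ht x ⟨hxK, hx⟩
  by_contra hxU
  exact ht x ⟨hxK, hxU⟩ hxK hx

theorem mutInfo_eq_entropy_sub_condEntropy {A B : Type*} [Fintype A] [Fintype B]
    {P : A → ℝ} {W : A → B → ℝ} (hP : ∀ a, 0 ≤ P a) (hW : ∀ a b, 0 ≤ W a b) :
    mutInfo P W = ∑ b, negMulLog (∑ a, P a * W a b) - ∑ a, P a * ∑ b, negMulLog (W a b) := by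
  set q : B → ℝ := fun b => ∑ a, P a * W a b
  have hterm : ∀ a b, P a * W a b * log (W a b / q b) =
      P a * (W a b * log (W a b)) - P a * W a b * log (q b) := by
    intro a b
    rcases (mul_nonneg (hP a) (hW a b)).eq_or_lt with h0 | hpos
    · rw [← mul_assoc, ← h0]
      simp
    have hq : P a * W a b ≤ q b :=
      single_le_sum (fun a' _ => mul_nonneg (hP a') (hW a' b)) (mem_univ a)
    rw [log_div (pos_of_mul_pos_right hpos (hP a)).ne' (hpos.trans_le hq).ne']
    ring
  calc mutInfo P W
      = ∑ a, ∑ b, (P a * (W a b * log (W a b)) - P a * W a b * log (q b)) :=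
        sum_congr rfl fun a _ => sum_congr rfl fun b _ => hterm a b
    _ = ∑ a, P a * ∑ b, W a b * log (W a b) - ∑ b, q b * log (q b) := by
        simp only [q, sum_sub_distrib, mul_sum, sum_mul]
        rw [sum_comm (γ := B)]
    _ = _ := by simp only [q, negMulLog, neg_mul, sum_neg_distrib, mul_neg]; ring

theorem continuousOn_mutInfo {A B : Type*} [Fintype A] [Fintype B] {W : A → B → ℝ}
    (hW : ∀ a b, 0 ≤ W a b) :
    ContinuousOn (fun P => mutInfo P W) {P : A → ℝ | ∀ a, 0 ≤ P a} :=
  ContinuousOn.congr (f := fun P : A → ℝ =>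
      ∑ b, negMulLog (∑ a, P a * W a b) - ∑ a, P a * ∑ b, negMulLog (W a b))
    (by fun_prop) fun _ hP => mutInfo_eq_entropy_sub_condEntropy hP hW

theorem stmt9_general {A B : Type*} [Fintype A] [Fintype B]
    (W : A → B → ℝ) (hW : ∀ a, (∀ b, 0 ≤ W a b) ∧ ∑ b, W a b = 1)
    (c : A → ℝ)
    (CC : ℝ → ℝ)
    (Γ : ℝ) (hCont : ContinuousAt CC Γ)
    (Pstar : A → ℝ)
    (huniq : ∀ P ∈ probs A, (∑ a, P a * c a) ≤ Γ → mutInfo P W = CC Γ → P = Pstar) :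
    ∀ ε > (0 : ℝ), ∃ δ > (0 : ℝ), ∀ Γ' : ℝ, |Γ' - Γ| < δ →
      ∀ P ∈ probs A, (∑ a, P a * c a) ≤ Γ' → mutInfo P W = CC Γ' →
        (∑ a, |P a - Pstar a|) < ε := by
  intro ε hε
  have hball : IsOpen {P : A → ℝ | ∑ a, |P a - Pstar a| < ε} :=
    isOpen_lt (by fun_prop) continuous_const
  have hmutInfo : ContinuousOn (fun P => mutInfo P W) (probs A) :=
    (continuousOn_mutInfo fun a => (hW a).1).mono fun P hP => hP.1
  have hcost : Continuous fun P : A → ℝ => ∑ a, P a * c a := by fun_prop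
  have hsub : {P ∈ probs A | ∑ a, P a * c a ≤ Γ ∧ mutInfo P W = CC Γ} ⊆
      {P | ∑ a, |P a - Pstar a| < ε} := by
    rintro P ⟨hP, hPcost, hPopt⟩
    simp [huniq P hP hPcost hPopt, hε]
  obtain ⟨δ, hδ, hnear⟩ := Metric.eventually_nhds_iff.mp <|
    (isCompact_stdSimplex ℝ A).eventually_sep_subset hball hmutInfo hcost.continuousOn hCont hsub
  exact ⟨δ, hδ, fun Γ' hΓ' P hP hPcost hPopt => hnear hΓ' ⟨hP, hPcost, hPopt⟩⟩

/-- Upper hemicontinuity of the set of capacity-cost-achieving distributions at a cost `Γ`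
where the maximizer `P*[Γ]` is unique: for every `ε > 0` there is `δ > 0` such that
`|Γ' − Γ| < δ` implies every capacity-cost-achieving distribution at cost `Γ'` is within
`ε` of `P*[Γ]` in `ℓ¹` distance. -/
theorem stmt9 {A B : Type*} [Fintype A] [Fintype B]
    (W : A → B → ℝ) (hW : ∀ a, (∀ b, 0 ≤ W a b) ∧ ∑ b, W a b = 1)
    (c : A → ℝ) (cmax : ℝ) (hc : ∀ a, c a ∈ Set.Icc 0 cmax)
    (CC : ℝ → ℝ)
    (hCC : ∀ Γ', CC Γ' =
      sSup {x | ∃ P ∈ probs A, (∑ a, P a * c a) ≤ Γ' ∧ x = mutInfo P W})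
    (Γ : ℝ) (hΓ0 : ∃ a, c a < Γ) (hCont : ContinuousAt CC Γ)
    (Pstar : A → ℝ) (hPstar : Pstar ∈ probs A)
    (hPcost : ∑ a, Pstar a * c a ≤ Γ) (hPopt : mutInfo Pstar W = CC Γ)
    (huniq : ∀ P ∈ probs A, (∑ a, P a * c a) ≤ Γ → mutInfo P W = CC Γ → P = Pstar) :
    ∀ ε > (0 : ℝ), ∃ δ > (0 : ℝ), ∀ Γ' : ℝ, |Γ' - Γ| < δ →
      ∀ P ∈ probs A, (∑ a, P a * c a) ≤ Γ' → mutInfo P W = CC Γ' →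
        (∑ a, |P a - Pstar a|) < ε :=
  stmt9_general W hW c CC Γ hCont Pstar huniq
end

section
/- Let Q* and Q_cc be two probability distributions on Bⁿ (B a finite set) defined as follows: Q*(yⁿ) = Σ_{xⁿ} P*(x₁)···P*(xₙ)·Π_i W(y_i|x_i), and Q_cc(yⁿ) = Σ_{xⁿ ∈ T} (1/|T|)·Π_i W(y_i|x_i), where T is the type class of an n-type t with ‖t − P*‖₁ ≤ τ'/n for a constant τ'. Then there exist an integer N and a constant κ such that for all n > N and all yⁿ ∈ Bⁿ, log( Q*(yⁿ)/Q_cc(yⁿ) ) ≥ −((s(P*) − 1)/2)·log n − κ, where s(P*) is the support size of P*. -/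
/-!
Restricting the sum defining `Q*(yⁿ)` to the type class `T` of `t = k / n`, every term carries
the same weight `∏ₐ P*(a)^{kₐ}`, so `Q*(yⁿ) / Q_cc(yⁿ) ≥ |T| · ∏ₐ P*(a)^{kₐ}`. Orbit–stabilizer
gives `|T| ≥ n! / ∏ₐ kₐ!`, and Stirling's bounds turn the logarithm of the right-hand side into
`-n·D(t ‖ P*) - ((s - 1)/2)·log n - O(1)`, where `s` is the support size of `P*`. Finally
`log x ≥ 1 - 1/x` gives `n·D(t ‖ P*) ≤ ∑ₐ (n / P*(a))·|t a - P*(a)|`, which is `O(1)` because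
`‖t - P*‖₁ ≤ τ'/n`.
-/

open Finset Real
open scoped Classical Nat

lemma log_factorial_ge (n : ℕ) : n * log n - n + log n / 2 ≤ log (n ! : ℝ) := by
  rcases eq_or_ne n 0 with rfl | hn
  · simp
  have := Stirling.le_log_factorial_stirling hn
  have : 0 ≤ log (2 * π) := log_nonneg (by nlinarith [pi_gt_three])
  linarith

lemma log_factorial_le (n : ℕ) : log (n ! : ℝ) ≤ n * log n - n + log n / 2 + 1 := by
  obtain _ | m := n
  · simp
  have hseq : Stirling.stirlingSeq (m + 1) ≤ Stirling.stirlingSeq 1 :=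
    Stirling.stirlingSeq'_antitone (Nat.zero_le m)
  have hlog := log_le_log (Stirling.stirlingSeq'_pos m) hseq
  rw [Stirling.log_stirlingSeq_formula, Stirling.stirlingSeq_one,
    log_div (exp_pos 1).ne' (by positivity), log_exp, log_sqrt zero_le_two,
    log_mul two_ne_zero (by positivity), log_div (by positivity) (exp_pos 1).ne', log_exp] at hlog
  linarith

lemma neg_div_mul_abs_le_mul_log {k n p : ℝ} (hk : 0 ≤ k) (hkn : k ≤ n) (hp : 0 < p) :
    -(n / p * |k / n - p|) ≤ k * log n - k * log k + k * log p := by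
  rcases hk.eq_or_lt with rfl | hk
  · simp only [zero_mul, sub_zero, add_zero, neg_nonpos]; positivity
  have hn : 0 < n := hk.trans_le hkn
  have hlog : 1 - (n * p / k)⁻¹ ≤ log (n * p / k) := one_sub_inv_le_log_of_pos (by positivity)
  rw [log_div (by positivity) hk.ne', log_mul hn.ne' hp.ne'] at hlog
  calc -(n / p * |k / n - p|) ≤ -(k / p * |k / n - p|) := by gcongr
    _ ≤ k / p * (p - k / n) := by
        rw [neg_le, ← mul_neg, neg_sub]; gcongr; exact le_abs_self _
    _ = k * (1 - (n * p / k)⁻¹) := by field_simp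
    _ ≤ _ := by nlinarith

lemma sum_div_mul_abs_sub_le {A : Type*} [Fintype A] {t P : A → ℝ} {s : Finset A}
    (hP : ∀ a ∈ s, 0 < P a) {c ε : ℝ} (hc : 0 ≤ c) (h : ∑ a, |t a - P a| ≤ ε) :
    ∑ a ∈ s, c / P a * |t a - P a| ≤ c * ε * ∑ a ∈ s, (P a)⁻¹ := by
  rw [mul_sum]
  refine sum_le_sum fun a ha => ?_
  have hta : |t a - P a| ≤ ε :=
    (single_le_sum (f := fun a => |t a - P a|) (fun _ _ => abs_nonneg _) (mem_univ a)).trans h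
  calc c / P a * |t a - P a| ≤ c / P a * ε :=
        mul_le_mul_of_nonneg_left hta (div_nonneg hc (hP a ha).le)
    _ = c * ε * (P a)⁻¹ := by ring

section TypeClass

variable {A : Type*} [Fintype A] {n : ℕ}

/-- The type class `Tⁿ(k / n)` of information theory. -/
noncomputable def typeClass (n : ℕ) (k : A → ℕ) : Finset (Fin n → A) :=
  univ.filter fun x => ∀ a, #{i | x i = a} = k a

variable {k : A → ℕ} {x : Fin n → A}

lemma mem_typeClass : x ∈ typeClass n k ↔ ∀ a, #{i | x i = a} = k a := by
  simp [typeClass]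

lemma sum_eq_of_mem_typeClass (hx : x ∈ typeClass n k) : ∑ a, k a = n := by
  simp_rw [← mem_typeClass.1 hx]
  simpa using (card_eq_sum_card_fiberwise (f := x) (s := univ) (t := univ) (by simp)).symm

lemma prod_comp_eq_prod_pow_of_mem_typeClass {M : Type*} [CommMonoid M] (f : A → M)
    (hx : x ∈ typeClass n k) : ∏ i, f (x i) = ∏ a, f a ^ k a := by
  rw [← prod_fiberwise univ x (fun i => f (x i))]
  refine prod_congr rfl fun a _ => ?_
  rw [prod_congr rfl fun i hi => by rw [(mem_filter.1 hi).2], prod_const, mem_typeClass.1 hx a]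

lemma factorial_le_card_typeClass_mul (hx : x ∈ typeClass n k) :
    n ! ≤ #(typeClass n k) * ∏ a, (k a)! := by
  let G := (Equiv.Perm (Fin n))ᵈᵐᵃ
  have hG : Nat.card G = n ! := by
    rw [Nat.card_congr DomMulAct.mk.symm]; simp [Fintype.card_perm]
  have hstab : Nat.card (MulAction.stabilizer G x) = ∏ a, (k a)! := by
    rw [Nat.card_congr (MulOpposite.opEquiv (α := MulAction.stabilizer G x)),
      Nat.card_congr (DomMulAct.stabilizerMulEquiv x).toEquiv, Nat.card_pi]
    simp [← mem_typeClass.1 hx, Fintype.card_perm, Fintype.card_subtype]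
  have horbit : MulAction.orbit G x ⊆ typeClass n k := by
    rintro _ ⟨σ, rfl⟩
    refine mem_typeClass.2 fun a => (card_equiv (DomMulAct.mk.symm σ) fun i => ?_).trans
      (mem_typeClass.1 hx a)
    simp only [mem_filter, mem_univ, true_and]; rfl
  calc n ! = Nat.card (MulAction.stabilizer G x) * (MulAction.orbit G x).ncard := by
        rw [← MulAction.index_stabilizer, Subgroup.card_mul_index, hG]
    _ ≤ _ := by
      rw [hstab, mul_comm]
      gcongr
      simpa using Set.ncard_le_ncard horbit

lemma log_factorial_sub_sum_log_factorial_le_log_card (hx : x ∈ typeClass n k) :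
    log (n ! : ℝ) - ∑ a, log ((k a)! : ℝ) ≤ log #(typeClass n k) := by
  have hfact (a : A) : ((k a)! : ℝ) ≠ 0 := by positivity
  have hT : (0 : ℝ) < #(typeClass n k) := by exact_mod_cast card_pos.2 ⟨x, hx⟩
  have := log_le_log (by positivity) (by exact_mod_cast factorial_le_card_typeClass_mul hx :
    (n ! : ℝ) ≤ #(typeClass n k) * ∏ a, ((k a)! : ℝ))
  rw [log_mul hT.ne' (prod_ne_zero_iff.2 fun a _ => hfact a), log_prod fun a _ => hfact a] at this
  linarith

lemma log_multinomial_add_sum_mul_log_ge {P : A → ℝ} {s : Finset A}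
    (hP : ∀ a ∈ s, 0 < P a) (hk : ∀ a ∉ s, k a = 0) (hn : ∑ a, k a = n) :
    -((#s - 1) / 2) * log n - #s - ∑ a ∈ s, n / P a * |k a / n - P a|
      ≤ log (n ! : ℝ) - ∑ a, log ((k a)! : ℝ) + ∑ a, k a * log (P a) := by
  have restrict (f : A → ℝ) (hf : ∀ a, k a = 0 → f a = 0) : ∑ a, f a = ∑ a ∈ s, f a :=
    (sum_subset (subset_univ s) fun a _ ha => hf a (hk a ha)).symm
  have hsum : ∑ a ∈ s, (k a : ℝ) = n := by
    rw [← restrict _ fun a ha => by simp [ha], ← Nat.cast_sum, hn]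
  have hkn (a : A) : k a ≤ n := hn ▸ single_le_sum (fun _ _ => Nat.zero_le _) (mem_univ a)
  have hfact : ∑ a ∈ s, log ((k a)! : ℝ)
      ≤ ∑ a ∈ s, (k a * log (k a) - k a + log n / 2 + 1) := by
    refine sum_le_sum fun a _ => (log_factorial_le (k a)).trans ?_
    have : log (k a) ≤ log n := by
      rcases (Nat.zero_le (k a)).eq_or_lt with h | h
      · rw [← h, Nat.cast_zero, log_zero]; exact log_natCast_nonneg n
      · exact log_le_log (by exact_mod_cast h) (by exact_mod_cast hkn a)
    linarith
  have hent : -∑ a ∈ s, n / P a * |k a / n - P a|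
      ≤ ∑ a ∈ s, (k a * log n - k a * log (k a) + k a * log (P a)) := by
    rw [← sum_neg_distrib]
    exact sum_le_sum fun a ha =>
      neg_div_mul_abs_le_mul_log (Nat.cast_nonneg _) (by exact_mod_cast hkn a) (hP a ha)
  rw [restrict _ fun a ha => by simp [ha],
    restrict (fun a => k a * log (P a)) fun a ha => by simp [ha]]
  simp only [sum_add_distrib, sum_sub_distrib, ← sum_mul, hsum, sum_const, nsmul_eq_mul]
    at hfact hent
  linarith [log_factorial_ge n]

lemma prod_pow_mul_sum_typeClass_le_prod_sum {P : A → ℝ} (hP : ∀ a, 0 ≤ P a)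
    {w : Fin n → A → ℝ} (hw : ∀ i a, 0 ≤ w i a) (k : A → ℕ) :
    (∏ a, P a ^ k a) * ∑ x ∈ typeClass n k, ∏ i, w i (x i) ≤ ∏ i, ∑ a, P a * w i a := by
  rw [prod_univ_sum, Fintype.piFinset_univ, mul_sum]
  calc ∑ x ∈ typeClass n k, (∏ a, P a ^ k a) * ∏ i, w i (x i)
      = ∑ x ∈ typeClass n k, ∏ i, P (x i) * w i (x i) := sum_congr rfl fun x hx => by
        rw [prod_mul_distrib, prod_comp_eq_prod_pow_of_mem_typeClass P hx]
    _ ≤ _ := sum_le_sum_of_subset_of_nonneg (subset_univ _) fun x _ _ =>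
        prod_nonneg fun i _ => mul_nonneg (hP _) (hw _ _)

lemma log_multinomial_add_sum_mul_log_le_log_div {P : A → ℝ} (hP : ∀ a, 0 ≤ P a)
    (hPk : ∀ a, P a = 0 → k a = 0) {w : Fin n → A → ℝ} (hw : ∀ i a, 0 ≤ w i a)
    (hS : 0 < ∑ x ∈ typeClass n k, ∏ i, w i (x i)) :
    log (n ! : ℝ) - ∑ a, log ((k a)! : ℝ) + ∑ a, k a * log (P a)
      ≤ log ((∏ i, ∑ a, P a * w i a) /
          ((∑ x ∈ typeClass n k, ∏ i, w i (x i)) / #(typeClass n k))) := by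
  obtain ⟨x, hx⟩ := nonempty_of_sum_ne_zero hS.ne'
  have hT : (0 : ℝ) < #(typeClass n k) := by exact_mod_cast card_pos.2 ⟨x, hx⟩
  have hc (a : A) : 0 < P a ^ k a := by
    rcases (hP a).eq_or_lt with h | h
    · simp [hPk a h.symm]
    · positivity
  calc _ ≤ log #(typeClass n k) + log (∏ a, P a ^ k a) := by
        rw [log_prod fun a _ => (hc a).ne']
        simp only [log_pow]
        linarith [log_factorial_sub_sum_log_factorial_le_log_card hx]
    _ = log ((∏ a, P a ^ k a) * #(typeClass n k)) := by
        rw [log_mul (prod_pos fun a _ => hc a).ne' hT.ne', add_comm]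
    _ ≤ _ := by
        refine log_le_log (mul_pos (prod_pos fun a _ => hc a) hT) ?_
        rw [le_div_iff₀ (div_pos hS hT), mul_assoc, mul_div_cancel₀ _ hT.ne']
        exact prod_pow_mul_sum_typeClass_le_prod_sum hP hw k

end TypeClass

/-- Comparison of the i.i.d. output distribution `Q*` and the constant-composition output
distribution `Q_cc` (over a type class `T` of an `n`-type `t` with `‖t − P*‖₁ ≤ τ'/n`):
there are `N` and `κ` such that for all `n > N` and every output sequence `yⁿ`,
`log(Q*(yⁿ)/Q_cc(yⁿ)) ≥ −((s(P*)−1)/2)·log n − κ`. -/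
theorem stmt11 {A B : Type*} [Fintype A] [Fintype B]
    (W : A → B → ℝ) (hW : ∀ a, (∀ b, 0 ≤ W a b) ∧ ∑ b, W a b = 1)
    (Pstar : A → ℝ) (hP0 : ∀ a, 0 ≤ Pstar a) (hP1 : ∑ a, Pstar a = 1)
    (τ' : ℝ) (hτ' : 0 ≤ τ') :
    ∃ N : ℕ, ∃ κ : ℝ, ∀ n : ℕ, N < n → ∀ t : A → ℝ,
      (∀ a, ∃ k : ℕ, t a = (k : ℝ) / n) →
      (∑ a, |t a - Pstar a|) ≤ τ' / n →
      (∀ a, t a ≠ 0 → Pstar a ≠ 0) →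
      ∀ y : Fin n → B,
        Real.log
            ((∏ i, ∑ a, Pstar a * W a (y i)) /
              (((Finset.univ.filter (fun x : Fin n → A => ∀ a,
                  (((Finset.univ.filter (fun i => x i = a)).card : ℝ) = n * t a))).sum
                  (fun x => ∏ i, W (x i) (y i))) /
                ((Finset.univ.filter (fun x : Fin n → A => ∀ a,
                  (((Finset.univ.filter (fun i => x i = a)).card : ℝ) = n * t a))).card)))
          ≥ -((((Finset.univ.filter (fun a => Pstar a ≠ 0)).card : ℝ) - 1) / 2) * Real.log n
              - κ := by
  set s := univ.filter fun a => Pstar a ≠ 0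
  have hPs (a : A) (ha : a ∈ s) : 0 < Pstar a := (hP0 a).lt_of_ne' (mem_filter.1 ha).2
  obtain ⟨a₀, -, ha₀⟩ := exists_ne_zero_of_sum_ne_zero (hP1.trans_ne one_ne_zero)
  have hs : (1 : ℝ) ≤ #s := by exact_mod_cast card_pos.2 ⟨a₀, mem_filter.2 ⟨mem_univ a₀, ha₀⟩⟩
  refine ⟨0, #s + τ' * ∑ a ∈ s, (Pstar a)⁻¹, fun n hn t ht hl1 hsupp y => ?_⟩
  choose k hk using ht
  have hn' : (n : ℝ) ≠ 0 := by positivity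
  have hT : (univ.filter fun x : Fin n → A => ∀ a, (#{i | x i = a} : ℝ) = n * t a)
      = typeClass n k :=
    filter_congr fun x _ => by simp_rw [hk, mul_div_cancel₀ _ hn', Nat.cast_inj]
  have hPk (a : A) (ha : Pstar a = 0) : k a = 0 := by
    have : t a = 0 := by_contra fun h => hsupp a h ha
    simpa [hk, hn'] using this
  have hdev : ∑ a ∈ s, n / Pstar a * |k a / n - Pstar a| ≤ τ' * ∑ a ∈ s, (Pstar a)⁻¹ := by
    simpa only [← hk, mul_div_cancel₀ _ hn'] using sum_div_mul_abs_sub_le hPs n.cast_nonneg hl1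
  rw [hT, ge_iff_le]
  rcases (sum_nonneg fun x _ => prod_nonneg fun i _ => (hW _).1 _ :
    0 ≤ ∑ x ∈ typeClass n k, ∏ i, W (x i) (y i)).eq_or_lt with hS | hS
  · -- `Q_cc(yⁿ) = 0`, so the left side is the junk value `log (Q*(yⁿ) / 0) = 0`
    rw [← hS, zero_div, div_zero, log_zero]
    have hκ : 0 ≤ τ' * ∑ a ∈ s, (Pstar a)⁻¹ :=
      mul_nonneg hτ' (sum_nonneg fun a ha => (inv_pos.2 (hPs a ha)).le)
    nlinarith [log_natCast_nonneg n]
  obtain ⟨x, hx⟩ := nonempty_of_sum_ne_zero hS.ne'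
  calc _ ≤ -((#s - 1) / 2) * log n - #s - ∑ a ∈ s, n / Pstar a * |k a / n - Pstar a| := by
        linarith
    _ ≤ log (n ! : ℝ) - ∑ a, log ((k a)! : ℝ) + ∑ a, k a * log (Pstar a) :=
        log_multinomial_add_sum_mul_log_ge hPs (fun a ha => hPk a (by simpa [s] using ha))
          (sum_eq_of_mem_typeClass hx)
    _ ≤ _ := log_multinomial_add_sum_mul_log_le_log_div hP0 hPk (fun i a => (hW a).1 (y i)) hS
end

section
/- (Meta-converse bound) Let W : Aⁿ → P(Bⁿ) be a channel, and consider a random code with M messages, encoder-induced input distribution P̄ on Aⁿ, and average error probability at most ε ∈ (0,1). Then for every ρ > 0 and every auxiliary distribution q on Bⁿ, log M ≤ log ρ − log[ ( 1 − ε − (P̄ ∘ W)( W(Yⁿ|Xⁿ)/q(Yⁿ) > ρ ) )⁺ ], where (P̄ ∘ W) is the joint law of (Xⁿ, Yⁿ) with Xⁿ ~ P̄ and Yⁿ ~ W(·|Xⁿ), and (·)⁺ = max(·, 0). -/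
/-!
The decoder turns any code into a test between the joint law `P̄ ∘ W` of input and output and
the product law `P̄ × q`: weight the pair `(x, y)` by the probability, under `P̄`, that `x` was
sent for a message the decoder recovers from `y`. This test has power at least `1 - ε` against
`P̄ ∘ W`, and since for each `y` the decoder's guesses sum to one, its size against `P̄ × q` is
exactly `1 / M`. The Neyman–Pearson bound `α - ρ β ≤ (P̄ ∘ W)(W / q > ρ)`, valid for every test,
then gives `1 - ε - ρ / M ≤ (P̄ ∘ W)(W / q > ρ)`.
-/

open Finset

/-- With `t = P̄ Z`, `u = P̄`, `a = W` and `b = ρ q` this is `α - ρ β ≤ P(dP/dQ > ρ)` for the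
test `Z`. -/
theorem sum_mul_sub_le_sum_ite {ι : Type*} (s : Finset ι) (t u a b : ι → ℝ)
    (ht : ∀ i ∈ s, 0 ≤ t i) (htu : ∀ i ∈ s, t i ≤ u i) (hb : ∀ i ∈ s, 0 ≤ b i) :
    ∑ i ∈ s, t i * (a i - b i) ≤ ∑ i ∈ s, if b i < a i then u i * a i else 0 := by
  refine sum_le_sum fun i hi => ?_
  split_ifs with hba
  · calc t i * (a i - b i) ≤ u i * (a i - b i) :=
          mul_le_mul_of_nonneg_right (htu i hi) (sub_nonneg.2 hba.le)
      _ ≤ u i * a i := by nlinarith [ht i hi, htu i hi, hb i hi]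
  · exact mul_nonpos_of_nonneg_of_nonpos (ht i hi) (by linarith)

namespace RandomCode

variable {X Y : Type*} {M : ℕ}

/-- `P̄(x) Z(x, y)`, where `Z` is the test induced by the decoder. -/
noncomputable def testWeight (e : Fin M → X → ℝ) (g : Y → Fin M → ℝ) (x : X) (y : Y) : ℝ :=
  (1 / M : ℝ) * ∑ m, e m x * g y m

variable {e : Fin M → X → ℝ} {g : Y → Fin M → ℝ}

theorem testWeight_nonneg (he : ∀ m x, 0 ≤ e m x) (hg : ∀ y m, 0 ≤ g y m) (x : X) (y : Y) :
    0 ≤ testWeight e g x y :=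
  mul_nonneg (by positivity) (sum_nonneg fun m _ => mul_nonneg (he m x) (hg y m))

theorem testWeight_le_input (he : ∀ m x, 0 ≤ e m x) (hg : ∀ y, (∀ m, 0 ≤ g y m) ∧ ∑ m, g y m = 1)
    (x : X) (y : Y) : testWeight e g x y ≤ (1 / M : ℝ) * ∑ m, e m x := by
  have hg_le_one (m : Fin M) : g y m ≤ 1 :=
    (hg y).2 ▸ single_le_sum (fun m _ => (hg y).1 m) (mem_univ m)
  refine mul_le_mul_of_nonneg_left (sum_le_sum fun m _ => ?_) (by positivity)
  exact mul_le_of_le_one_right (he m x) (hg_le_one m)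

variable [Fintype X]

theorem sum_testWeight_left (he : ∀ m, ∑ x, e m x = 1) (hg : ∀ y, ∑ m, g y m = 1) (y : Y) :
    ∑ x, testWeight e g x y = 1 / M := by
  simp only [testWeight, ← mul_sum]
  rw [sum_comm]
  simp only [← sum_mul, he, one_mul, hg, mul_one]

variable [Fintype Y]

theorem sum_testWeight_mul_output (he : ∀ m, ∑ x, e m x = 1) (hg : ∀ y, ∑ m, g y m = 1)
    {q : Y → ℝ} (hq : ∑ y, q y = 1) :
    ∑ x, ∑ y, testWeight e g x y * q y = 1 / M := by
  rw [sum_comm]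
  simp only [← sum_mul, sum_testWeight_left he hg, ← mul_sum, hq, mul_one]

theorem error_add_sum_testWeight_mul_channel {W : X → Y → ℝ} (hW : ∀ x, ∑ y, W x y = 1)
    (hM : 0 < M) (he : ∀ m, ∑ x, e m x = 1) :
    (1 / M : ℝ) * ∑ m, ∑ x, e m x * ∑ y, W x y * (1 - g y m)
      + ∑ x, ∑ y, testWeight e g x y * W x y = 1 := by
  have success : ∑ x, ∑ y, testWeight e g x y * W x y
      = (1 / M : ℝ) * ∑ m, ∑ x, e m x * ∑ y, W x y * g y m := by
    simp only [testWeight, mul_sum, sum_mul]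
    rw [sum_congr rfl fun x _ => sum_comm, sum_comm]
    exact sum_congr rfl fun _ _ => sum_congr rfl fun _ _ => sum_congr rfl fun _ _ => by ring
  have hW' (x : X) (m : Fin M) : ∑ y, W x y * (1 - g y m) + ∑ y, W x y * g y m = 1 := by
    simp only [← sum_add_distrib, ← mul_add, sub_add_cancel, mul_one, hW]
  rw [success, ← mul_add, ← sum_add_distrib]
  simp only [← sum_add_distrib, ← mul_add, hW', mul_one, he, sum_const, card_univ,
    Fintype.card_fin, nsmul_eq_mul]
  field_simp

end RandomCode

open RandomCode in
theorem stmt12_general {X Y : Type*} [Fintype X] [Fintype Y]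
    (W : X → Y → ℝ) (hW : ∀ x, (∀ y, 0 ≤ W x y) ∧ ∑ y, W x y = 1)
    (M : ℕ) (hM : 0 < M)
    (e : Fin M → X → ℝ) (he : ∀ m, (∀ x, 0 ≤ e m x) ∧ ∑ x, e m x = 1)
    (g : Y → Fin M → ℝ) (hg : ∀ y, (∀ m, 0 ≤ g y m) ∧ ∑ m, g y m = 1)
    (ε : ℝ)
    (herr : (1 / M : ℝ) * ∑ m, ∑ x, e m x * ∑ y, W x y * (1 - g y m) ≤ ε)
    (ρ : ℝ) (hρ : 0 < ρ)
    (q : Y → ℝ) (hq0 : ∀ y, 0 ≤ q y) (hq1 : ∑ y, q y = 1) :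
    (M : ℝ) *
        max (1 - ε - ∑ x, ∑ y,
          (if ρ * q y < W x y then ((1 / M : ℝ) * ∑ m, e m x) * W x y else 0)) 0
      ≤ ρ := by
  set T := testWeight e g
  have power : 1 - ε ≤ ∑ x, ∑ y, T x y * W x y := by
    linarith [error_add_sum_testWeight_mul_channel (g := g) (fun x => (hW x).2) hM
      (fun m => (he m).2)]
  have size : ∑ x, ∑ y, T x y * q y = 1 / M :=
    sum_testWeight_mul_output (fun m => (he m).2) (fun y => (hg y).2) hq1
  have neymanPearson : ∑ x, ∑ y, T x y * (W x y - ρ * q y)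
      ≤ ∑ x, ∑ y, if ρ * q y < W x y then ((1 / M : ℝ) * ∑ m, e m x) * W x y else 0 :=
    sum_le_sum fun x _ => sum_mul_sub_le_sum_ite _ _ _ _ _
      (fun y _ => testWeight_nonneg (fun m => (he m).1) (fun y => (hg y).1) x y)
      (fun y _ => testWeight_le_input (fun m => (he m).1) hg x y)
      (fun y _ => mul_nonneg hρ.le (hq0 y))
  have expand : ∑ x, ∑ y, T x y * (W x y - ρ * q y)
      = ∑ x, ∑ y, T x y * W x y - ρ * ∑ x, ∑ y, T x y * q y := by
    simp only [mul_sub, sum_sub_distrib, mul_sum]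
    exact congrArg _ (sum_congr rfl fun _ _ => sum_congr rfl fun _ _ => by ring)
  rw [← le_div_iff₀' (by exact_mod_cast hM)]
  refine max_le ?_ (by positivity)
  rw [expand, size] at neymanPearson
  linarith [show ρ * (1 / M : ℝ) = ρ / M by ring]

/-- Meta-converse bound: for a random code with `M` equiprobable messages, randomized
encoder `e`, randomized decoder `g`, channel `W`, and average error probability at most
`ε`, one has (for every `ρ > 0` and auxiliary output distribution `q`)
`M · (1 − ε − (P̄∘W)(W(Y|X)/q(Y) > ρ))⁺ ≤ ρ`, which is the meta-converse bound
`log M ≤ log ρ − log[(1 − ε − (P̄∘W)(W(Y|X)/q(Y) > ρ))⁺]`. -/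
theorem stmt12 {X Y : Type*} [Fintype X] [Fintype Y]
    (W : X → Y → ℝ) (hW : ∀ x, (∀ y, 0 ≤ W x y) ∧ ∑ y, W x y = 1)
    (M : ℕ) (hM : 0 < M)
    (e : Fin M → X → ℝ) (he : ∀ m, (∀ x, 0 ≤ e m x) ∧ ∑ x, e m x = 1)
    (g : Y → Fin M → ℝ) (hg : ∀ y, (∀ m, 0 ≤ g y m) ∧ ∑ m, g y m = 1)
    (ε : ℝ) (hε : ε ∈ Set.Ioo (0 : ℝ) 1)
    (herr : (1 / M : ℝ) * ∑ m, ∑ x, e m x * ∑ y, W x y * (1 - g y m) ≤ ε)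
    (ρ : ℝ) (hρ : 0 < ρ)
    (q : Y → ℝ) (hq0 : ∀ y, 0 ≤ q y) (hq1 : ∑ y, q y = 1) :
    (M : ℝ) *
        max (1 - ε - ∑ x, ∑ y,
          (if ρ * q y < W x y then ((1 / M : ℝ) * ∑ m, e m x) * W x y else 0)) 0
      ≤ ρ :=
  stmt12_general W hW M hM e he g hg ε herr ρ hρ q hq0 hq1
end

section
/- For any probability distributions P and Q on a finite (or measurable) space, any α ∈ (0,1), and any ρ > 0: α − ρ·β_α(P, Q) ≤ P( dP/dQ > ρ ), where β_α(P, Q) is the minimum of Q-probability of acceptance over all (randomized) tests T whose P-probability of acceptance is at least α. -/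
/-! On every outcome, `(P u - ρ Q u) T u` is at most `P u` where the likelihood ratio exceeds `ρ`
and at most `0` elsewhere, since `0 ≤ T u ≤ 1`. Summing, any test of power at least `α` satisfies
`α - ρ Q(T) ≤ Σ (P - ρ Q) T ≤ P(P/Q > ρ)`, and taking the infimum over such tests gives the bound. -/

open Finset

lemma sub_mul_mul_le_ite {p q ρ t : ℝ} (hq : 0 ≤ q) (hρ : 0 ≤ ρ) (ht : t ∈ Set.Icc (0 : ℝ) 1) :
    (p - ρ * q) * t ≤ if ρ * q < p then p else 0 := by
  split_ifs with h
  · nlinarith [ht.1, ht.2, mul_nonneg hρ hq]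
  · exact mul_nonpos_of_nonpos_of_nonneg (by linarith) ht.1

lemma sub_mul_sum_test_le {U : Type*} [Fintype U] {P Q T : U → ℝ} {α ρ : ℝ}
    (hQ0 : ∀ u, 0 ≤ Q u) (hρ : 0 ≤ ρ) (hT : ∀ u, T u ∈ Set.Icc (0 : ℝ) 1)
    (hα : α ≤ ∑ u, P u * T u) :
    α - ρ * ∑ u, Q u * T u ≤ ∑ u, if ρ * Q u < P u then P u else 0 :=
  calc α - ρ * ∑ u, Q u * T u ≤ ∑ u, (P u - ρ * Q u) * T u := by
        simp only [sub_mul, sum_sub_distrib, mul_sum, mul_assoc]; linarith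
    _ ≤ _ := sum_le_sum fun u _ => sub_mul_mul_le_ite (hQ0 u) hρ (hT u)

lemma sub_mul_csInf_le {S : Set ℝ} (hS : S.Nonempty) {a ρ r : ℝ} (hρ : 0 < ρ)
    (h : ∀ b ∈ S, a - ρ * b ≤ r) : a - ρ * sInf S ≤ r := by
  have : (a - r) / ρ ≤ sInf S :=
    le_csInf hS fun b hb => by rw [div_le_iff₀' hρ]; linarith [h b hb]
  rw [div_le_iff₀' hρ] at this
  linarith

theorem stmt13_general {U : Type*} [Fintype U]
    (P Q : U → ℝ) (hP1 : ∑ u, P u = 1)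
    (hQ0 : ∀ u, 0 ≤ Q u)
    (α : ℝ) (hα : α ∈ Set.Ioo (0 : ℝ) 1) (ρ : ℝ) (hρ : 0 < ρ) :
    α - ρ * sInf {b : ℝ | ∃ T : U → ℝ, (∀ u, T u ∈ Set.Icc (0 : ℝ) 1) ∧
        α ≤ (∑ u, P u * T u) ∧ b = ∑ u, Q u * T u}
      ≤ ∑ u, (if ρ * Q u < P u then P u else 0) := by
  have hall_accept : α ≤ ∑ u, P u * 1 := by simpa [hP1] using hα.2.le
  refine sub_mul_csInf_le ?_ hρ ?_
  · exact ⟨_, fun _ => 1, fun _ => ⟨zero_le_one, le_rfl⟩, hall_accept, rfl⟩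
  · rintro _ ⟨T, hT, hαT, rfl⟩
    exact sub_mul_sum_test_le hQ0 hρ.le hT hαT

/-- For distributions `P, Q` on a finite space, `α ∈ (0,1)` and `ρ > 0`:
`α − ρ·β_α(P, Q) ≤ P(dP/dQ > ρ)`, where `β_α(P,Q)` is the minimum type-II error
probability over randomized tests with type-I acceptance probability at least `α`. -/
theorem stmt13 {U : Type*} [Fintype U]
    (P Q : U → ℝ) (hP0 : ∀ u, 0 ≤ P u) (hP1 : ∑ u, P u = 1)
    (hQ0 : ∀ u, 0 ≤ Q u) (hQ1 : ∑ u, Q u = 1)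
    (α : ℝ) (hα : α ∈ Set.Ioo (0 : ℝ) 1) (ρ : ℝ) (hρ : 0 < ρ) :
    α - ρ * sInf {b : ℝ | ∃ T : U → ℝ, (∀ u, T u ∈ Set.Icc (0 : ℝ) 1) ∧
        α ≤ (∑ u, P u * T u) ∧ b = ∑ u, Q u * T u}
      ≤ ∑ u, (if ρ * Q u < P u then P u else 0) :=
  stmt13_general P Q hP1 hQ0 α hα ρ hρ
end

section
/- Let X' be a real random variable with E[X'] = 0 and Var(X') ≤ V/n, and let Ψ(X') be a two-valued function of X' taking value V₁ = V(Γ) + δ when X' ≥ 0 and V₂ = V(Γ) − δ when X' < 0, where 0 < δ < V(Γ). Suppose sup over the two values |1/√(V_i) − 1/√(V(Γ))| ≤ Δ/(C√V) and |1/V_i − 1/V(Γ)| ≤ (Δ/2)/(C²V) for a constant C > 0 and Δ > 0. Then: (i) |E[√n·C·X'/√(Ψ(X'))]| ≤ Δ, and (ii) Var( √n·C·X'/√(Ψ(X')) ) ≤ C²V/V(Γ) + (Δ/2) + Δ²/√n·(terms vanishing as n → ∞); in particular for all sufficiently large n, Var(√n·C·X'/√(Ψ(X'))) ≤ C²V/V(Γ)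 + Δ. -/
open MeasureTheory ProbabilityTheory
open scoped Classical

/-!
Write the variable as `X' · w(X')` with weight `w = √n C / √Ψ`. Because `E X' = 0`, the mean
does not change when `w` is recentred at the constant `√n C / √V(Γ)`, and the recentred
weight is at most `√n Δ / √V` in absolute value; Cauchy–Schwarz
`E|X'| ≤ √(E X'²) ≤ √(V/n)` then gives (i).
For (ii), the variance is at most the second moment `E[X'² w²]`, and `w² = n C² / Ψ` is bounded
by `n C² (1/V(Γ) + Δ/(2C²V))`, so it is at most `C² V/V(Γ) + Δ/2` for every `n ≥ 1`.
-/

section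

variable {Ω : Type*} [MeasurableSpace Ω] {μ : Measure Ω} {X w : Ω → ℝ}

lemma integral_abs_le_sqrt_integral_sq [IsProbabilityMeasure μ] (hX : MemLp X 2 μ) :
    ∫ ω, |X ω| ∂μ ≤ √(∫ ω, X ω ^ 2 ∂μ) := by
  have h := variance_eq_sub hX.abs
  simp only [Pi.pow_apply, Pi.abs_apply, sq_abs] at h
  exact Real.le_sqrt_of_sq_le (by linarith [variance_nonneg |X| μ])

lemma abs_integral_mul_le_of_integral_eq_zero (hX : Integrable X μ)
    (hw : AEStronglyMeasurable w μ) (hX0 : ∫ ω, X ω ∂μ = 0) {c ε : ℝ}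
    (hwc : ∀ ω, |w ω - c| ≤ ε) :
    |∫ ω, X ω * w ω ∂μ| ≤ ε * ∫ ω, |X ω| ∂μ := by
  have hint : Integrable (fun ω => (w ω - c) * X ω) μ :=
    hX.bdd_mul (hw.sub aestronglyMeasurable_const) (.of_forall hwc)
  have hcentre : ∫ ω, X ω * w ω ∂μ = ∫ ω, (w ω - c) * X ω ∂μ := by
    have : (fun ω => X ω * w ω) = fun ω => (w ω - c) * X ω + c * X ω := by
      funext ω; ring
    rw [this, integral_add hint (hX.const_mul c), integral_const_mul, hX0, mul_zero, add_zero]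
  calc |∫ ω, X ω * w ω ∂μ| ≤ ∫ ω, |(w ω - c) * X ω| ∂μ := by
        rw [hcentre]; exact abs_integral_le_integral_abs
    _ ≤ ∫ ω, ε * |X ω| ∂μ := by
        refine integral_mono hint.abs (hX.abs.const_mul ε) fun ω => ?_
        rw [abs_mul]; exact mul_le_mul_of_nonneg_right (hwc ω) (abs_nonneg _)
    _ = ε * ∫ ω, |X ω| ∂μ := integral_const_mul _ _

lemma variance_mul_le_of_sq_le [IsProbabilityMeasure μ] (hX : MemLp X 2 μ)
    (hw : AEStronglyMeasurable w μ) {K : ℝ} (hwK : ∀ ω, w ω ^ 2 ≤ K) :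
    variance (fun ω => X ω * w ω) μ ≤ K * ∫ ω, X ω ^ 2 ∂μ := by
  calc variance (fun ω => X ω * w ω) μ ≤ ∫ ω, (X ω * w ω) ^ 2 ∂μ :=
        variance_le_expectation_sq (hX.1.mul hw)
    _ ≤ ∫ ω, K * X ω ^ 2 ∂μ := by
        refine integral_mono_of_nonneg (.of_forall fun ω => sq_nonneg _)
          (hX.integrable_sq.const_mul K) (.of_forall fun ω => ?_)
        simp only [mul_pow, mul_comm K]
        exact mul_le_mul_of_nonneg_left (hwK ω) (sq_nonneg _)
    _ = K * ∫ ω, X ω ^ 2 ∂μ := integral_const_mul _ _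

end

section

variable {μ : Measure ℝ} [IsProbabilityMeasure μ] {ψ : ℝ → ℝ} {n V VΓ Δ C : ℝ}

lemma abs_integral_mul_div_sqrt_le (hX : MemLp id 2 μ) (hmean : ∫ x, x ∂μ = 0)
    (hsecond : ∫ x, x ^ 2 ∂μ ≤ V / n) (hn : 0 < n) (hV : 0 < V) (hC : 0 < C)
    (hψ : Measurable ψ) (h1 : ∀ x, |1 / √(ψ x) - 1 / √VΓ| ≤ Δ / (C * √V)) :
    |∫ x, √n * C * x / √(ψ x) ∂μ| ≤ Δ := by
  have hwc (x : ℝ) :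
      |√n * C * (1 / √(ψ x)) - √n * C * (1 / √VΓ)| ≤ √n * C * (Δ / (C * √V)) := by
    rw [← mul_sub, abs_mul, abs_of_pos (by positivity)]
    gcongr
    exact h1 x
  have hε : 0 ≤ √n * C * (Δ / (C * √V)) := (abs_nonneg _).trans (hwc 0)
  have hw : AEStronglyMeasurable (fun x => √n * C * (1 / √(ψ x))) μ :=
    (measurable_const.mul (measurable_const.div hψ.sqrt)).aestronglyMeasurable
  calc |∫ x, √n * C * x / √(ψ x) ∂μ|
      = |∫ x, x * (√n * C * (1 / √(ψ x))) ∂μ| := by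
        congr 2; funext x; ring
    _ ≤ √n * C * (Δ / (C * √V)) * ∫ x, |x| ∂μ :=
        abs_integral_mul_le_of_integral_eq_zero (hX.integrable one_le_two) hw hmean hwc
    _ ≤ √n * C * (Δ / (C * √V)) * √(∫ x, x ^ 2 ∂μ) := by
        gcongr; exact integral_abs_le_sqrt_integral_sq hX
    _ ≤ √n * C * (Δ / (C * √V)) * √(V / n) := by gcongr
    _ = Δ := by rw [Real.sqrt_div hV.le]; field_simp

lemma variance_mul_div_sqrt_le (hX : MemLp id 2 μ) (hsecond : ∫ x, x ^ 2 ∂μ ≤ V / n)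
    (hn : 0 < n) (hV : 0 < V) (hVΓ : 0 < VΓ) (hC : 0 < C) (hψ : Measurable ψ)
    (hψ_pos : ∀ x, 0 < ψ x) (h2 : ∀ x, |1 / ψ x - 1 / VΓ| ≤ Δ / 2 / (C ^ 2 * V)) :
    variance (fun x => √n * C * x / √(ψ x)) μ ≤ C ^ 2 * V / VΓ + Δ / 2 := by
  have hwK (x : ℝ) :
      (√n * C / √(ψ x)) ^ 2 ≤ n * C ^ 2 * (1 / VΓ + Δ / 2 / (C ^ 2 * V)) := by
    rw [div_pow, mul_pow, Real.sq_sqrt hn.le, Real.sq_sqrt (hψ_pos x).le,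
      div_eq_mul_one_div (n * C ^ 2)]
    gcongr
    linarith [(abs_le.1 (h2 x)).2]
  have hw : AEStronglyMeasurable (fun x => √n * C / √(ψ x)) μ :=
    (measurable_const.div hψ.sqrt).aestronglyMeasurable
  calc variance (fun x => √n * C * x / √(ψ x)) μ
      = variance (fun x => id x * (√n * C / √(ψ x))) μ := by
        congr 1; funext x; simp only [id]; ring
    _ ≤ n * C ^ 2 * (1 / VΓ + Δ / 2 / (C ^ 2 * V)) * ∫ x, id x ^ 2 ∂μ :=
        variance_mul_le_of_sq_le hX hw hwK
    _ ≤ n * C ^ 2 * (1 / VΓ + Δ / 2 / (C ^ 2 * V)) * (V / n) :=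
        mul_le_mul_of_nonneg_left hsecond ((sq_nonneg _).trans (hwK 0))
    _ = C ^ 2 * V / VΓ + Δ / 2 := by field_simp

end

/-- Mean and variance bounds for the normalized variable `√n·C·X'/√(Ψ(X'))`, where
`Ψ(X') = V(Γ)+δ` if `X' ≥ 0` and `V(Γ)−δ` otherwise, given `E[X'] = 0`,
`Var(X') ≤ V/n`, and uniform closeness of `1/√Ψ` and `1/Ψ` to `1/√V(Γ)` and `1/V(Γ)`:
(i) the mean is at most `Δ` in absolute value; (ii) for all sufficiently large `n`,
the variance is at most `C²V/V(Γ) + Δ`. -/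
theorem stmt18 (V VΓ δ Δ C : ℝ) (hV : 0 < V) (hδ : 0 < δ) (hδV : δ < VΓ)
    (hΔ : 0 < Δ) (hC : 0 < C)
    (h1 : ∀ Vi ∈ ({VΓ + δ, VΓ - δ} : Set ℝ),
      |1 / Real.sqrt Vi - 1 / Real.sqrt VΓ| ≤ Δ / (C * Real.sqrt V))
    (h2 : ∀ Vi ∈ ({VΓ + δ, VΓ - δ} : Set ℝ),
      |1 / Vi - 1 / VΓ| ≤ (Δ / 2) / (C ^ 2 * V)) :
    ∃ N : ℕ, ∀ n : ℕ, N ≤ n →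
      ∀ μ : Measure ℝ, IsProbabilityMeasure μ → MemLp id 2 μ →
        (∫ x, x ∂μ) = 0 → variance id μ ≤ V / n →
        |∫ x, Real.sqrt n * C * x / Real.sqrt (if 0 ≤ x then VΓ + δ else VΓ - δ) ∂μ| ≤ Δ ∧
        variance
            (fun x : ℝ =>
              Real.sqrt n * C * x / Real.sqrt (if 0 ≤ x then VΓ + δ else VΓ - δ)) μ
          ≤ C ^ 2 * V / VΓ + Δ := by
  refine ⟨1, fun n hn μ _ hX hmean hvar => ?_⟩
  have hn : (0 : ℝ) < n := by exact_mod_cast hn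
  set ψ : ℝ → ℝ := fun x => if 0 ≤ x then VΓ + δ else VΓ - δ
  have hψ_mem (x : ℝ) : ψ x ∈ ({VΓ + δ, VΓ - δ} : Set ℝ) := by
    by_cases h : 0 ≤ x <;> simp [ψ, h]
  have hψ_pos (x : ℝ) : 0 < ψ x := by
    rcases hψ_mem x with h | h <;> rw [h] <;> linarith
  have hψ : Measurable ψ := .ite measurableSet_Ici measurable_const measurable_const
  have hsecond : ∫ x, x ^ 2 ∂μ ≤ V / n :=
    (variance_of_integral_eq_zero measurable_id.aemeasurable hmean).symm.trans_le hvar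
  refine ⟨abs_integral_mul_div_sqrt_le hX hmean hsecond hn hV hC hψ
    fun x => h1 _ (hψ_mem x), ?_⟩
  have hvariance := variance_mul_div_sqrt_le hX hsecond hn hV (hδ.trans hδV) hC hψ hψ_pos
    fun x => h2 _ (hψ_mem x)
  linarith
end

section
/- Let A, B be finite sets, W a DMC, and P* a distribution on A achieving the capacity-cost function C(Γ) at cost Γ ∈ (Γ₀, Γ*) with Σ_a P*(a)c(a) = Γ, and let Q* = P*W be the induced output distribution. Assume the KKT-type property: for all a ∈ A, Σ_b W(b|a)·log(W(b|a)/Q*(b)) ≤ C(Γ) − C'(Γ)·(Γ − c(a)), with equality when P*(a) > 0, and C'(Γ) > 0. Let xⁿ ∈ Aⁿ satisfy (1/n)Σᵢ c(xᵢ) ≤ Γ − β for some β > 0, and let Y₁,…,Yₙ be independent with Yᵢ ~ W(·|xᵢ). Then for any fixed r ∈ ℝ and all sufficiently large n, P( Σᵢ log(W(Yᵢ|xᵢ)/Q*(Yᵢ)) > n·C(Γ) + √n·r ) ≤ 4·ν_max / (n·C'(Γ)²·β²), where ν_max = max_a Var(log(W(Y|a)/Q*(Y))), Y ~ W(·|a).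 -/
/-!
Centre the information density `Σᵢ log(W(Yᵢ|xᵢ)/Q*(Yᵢ))` at its mean. Summing the KKT inequality over
the letters of `xⁿ` and using the cost constraint puts the mean at most `n·C(Γ) − n·C'(Γ)·β`, so for
large `n` the threshold `n·C(Γ) + √n·r` lies at least `n·C'(Γ)·β/2` above it. The summands are
independent, so the variance of the sum is the sum of the per-letter variances, at most `n·ν_max`,
and Chebyshev's inequality gives the bound.
-/

open Finset

section ProductWeights

variable {ι B : Type*} [Fintype ι] [DecidableEq ι] [Fintype B] (p : ι → B → ℝ)

theorem sum_prod_mul_prod_eq_prod_sum (h : ι → B → ℝ) :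
    ∑ y : ι → B, (∏ i, p i (y i)) * ∏ i, h i (y i) = ∏ i, ∑ b, p i b * h i b := by
  rw [Fintype.prod_sum]
  simp only [prod_mul_distrib]

variable {p}

theorem sum_prod_mul_apply (hp : ∀ i, ∑ b, p i b = 1) (i : ι) (g : B → ℝ) :
    ∑ y : ι → B, (∏ k, p k (y k)) * g (y i) = ∑ b, p i b * g b := by
  have := sum_prod_mul_prod_eq_prod_sum p (fun k b => if k = i then g b else 1)
  simpa [Fintype.prod_ite_eq', hp] using this

theorem sum_prod_mul_apply_mul_apply (hp : ∀ i, ∑ b, p i b = 1) {i j : ι} (hij : i ≠ j)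
    (g₁ g₂ : B → ℝ) :
    ∑ y : ι → B, (∏ k, p k (y k)) * (g₁ (y i) * g₂ (y j))
      = (∑ b, p i b * g₁ b) * ∑ b, p j b * g₂ b := by
  have hpair : ∀ f : ι → ℝ, (∀ k, k ≠ i ∧ k ≠ j → f k = 1) → ∏ k, f k = f i * f j :=
    fun f hf => prod_eq_mul i j hij (fun k _ => hf k) (by simp) (by simp)
  have key := sum_prod_mul_prod_eq_prod_sum p
    (fun k b => if k = i then g₁ b else if k = j then g₂ b else 1)
  rw [hpair _ fun k hk => by simp [hk.1, hk.2, hp]] at key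
  simp only [if_neg hij.symm, if_true] at key
  rw [← key]
  refine sum_congr rfl fun y _ => ?_
  rw [hpair (fun k => if k = i then g₁ (y k) else if k = j then g₂ (y k) else 1)
    fun k hk => by simp [hk.1, hk.2]]
  simp [hij.symm]

theorem sum_prod_mul_sq_sum_sub_mean (hp : ∀ i, ∑ b, p i b = 1) (f : ι → B → ℝ) :
    ∑ y : ι → B, (∏ k, p k (y k)) * (∑ i, f i (y i) - ∑ i, ∑ b, p i b * f i b) ^ 2
      = ∑ i, ∑ b, p i b * (f i b - ∑ b', p i b' * f i b') ^ 2 := by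
  set g : ι → B → ℝ := fun i b => f i b - ∑ b', p i b' * f i b'
  have hg : ∀ i, ∑ b, p i b * g i b = 0 := fun i => by
    simp only [g, mul_sub, sum_sub_distrib, ← sum_mul, hp i, one_mul, sub_self]
  have hcross : ∀ i j, ∑ y : ι → B, (∏ k, p k (y k)) * (g i (y i) * g j (y j))
      = if i = j then ∑ b, p i b * g i b ^ 2 else 0 := by
    intro i j
    by_cases hij : i = j
    · subst hij
      simpa [sq] using sum_prod_mul_apply hp i fun b => g i b * g i b
    · rw [if_neg hij, sum_prod_mul_apply_mul_apply hp hij, hg i, zero_mul]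
  calc ∑ y : ι → B, (∏ k, p k (y k)) * (∑ i, f i (y i) - ∑ i, ∑ b, p i b * f i b) ^ 2
      = ∑ i, ∑ j, ∑ y : ι → B, (∏ k, p k (y k)) * (g i (y i) * g j (y j)) := by
        simp_rw [← sum_sub_distrib, sq, sum_mul_sum, mul_sum]
        rw [sum_comm]
        exact sum_congr rfl fun i _ => sum_comm
    _ = ∑ i, ∑ b, p i b * g i b ^ 2 := by simp only [hcross, sum_ite_eq, mem_univ, if_true]

end ProductWeights

theorem sum_ite_lt_le_sum_mul_sq_div_sq {Ω : Type*} [Fintype Ω] {w S : Ω → ℝ}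
    (hw : ∀ y, 0 ≤ w y) {m T : ℝ} (hmT : m < T) :
    ∑ y, (if T < S y then w y else 0) ≤ (∑ y, w y * (S y - m) ^ 2) / (T - m) ^ 2 := by
  rw [sum_div]
  refine sum_le_sum fun y _ => ?_
  split_ifs with hy
  · rw [le_div_iff₀ (by nlinarith)]
    exact mul_le_mul_of_nonneg_left (pow_le_pow_left₀ (by linarith) (by linarith) 2) (hw y)
  · exact div_nonneg (mul_nonneg (hw y) (sq_nonneg _)) (sq_nonneg _)

theorem neg_mul_div_two_le_sqrt_mul {a r x : ℝ} (ha : 0 < a) (hx : (2 * |r| / a) ^ 2 ≤ x) :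
    -(x * a / 2) ≤ √x * r := by
  have hsqrt : 2 * |r| / a ≤ √x := Real.le_sqrt_of_sq_le hx
  rw [div_le_iff₀ ha] at hsqrt
  have hx0 : 0 ≤ x := le_trans (sq_nonneg _) hx
  have := Real.mul_self_sqrt hx0
  nlinarith [neg_abs_le r, Real.sqrt_nonneg x]

theorem sum_le_of_le_sub_mul_sub {n : ℕ} {φ c : Fin n → ℝ} {C C' Γ β : ℝ}
    (hC' : 0 ≤ C') (hn : (0 : ℝ) < n) (hφ : ∀ i, φ i ≤ C - C' * (Γ - c i))
    (hc : (1 / n : ℝ) * ∑ i, c i ≤ Γ - β) :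
    ∑ i, φ i ≤ n * C - n * (C' * β) := by
  rw [one_div, inv_mul_le_iff₀ hn] at hc
  calc ∑ i, φ i ≤ ∑ i, (C - C' * (Γ - c i)) := sum_le_sum fun i _ => hφ i
    _ = n * C - C' * (n * Γ - ∑ i, c i) := by
      simp only [sum_sub_distrib, ← mul_sum, sum_const, card_univ, Fintype.card_fin, nsmul_eq_mul]
    _ ≤ n * C - n * (C' * β) := by nlinarith

theorem stmt19_general {A B : Type*} [Fintype A] [Fintype B]
    (W : A → B → ℝ) (hW : ∀ a, (∀ b, 0 ≤ W a b) ∧ ∑ b, W a b = 1)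
    (Pstar : A → ℝ)
    (c : A → ℝ)
    (Γ CΓ C' β νmax : ℝ) (hC' : 0 < C') (hβ : 0 < β)
    (hKKT : ∀ a, (∑ b, W a b * Real.log (W a b / ∑ a', Pstar a' * W a' b))
        ≤ CΓ - C' * (Γ - c a))
    (hν : ∀ a, (∑ b, W a b *
        (Real.log (W a b / ∑ a', Pstar a' * W a' b) -
          ∑ b', W a b' * Real.log (W a b' / ∑ a', Pstar a' * W a' b')) ^ 2) ≤ νmax)
    (r : ℝ) :
    ∃ N : ℕ, ∀ n : ℕ, N < n → ∀ x : Fin n → A,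
      (1 / n : ℝ) * (∑ i, c (x i)) ≤ Γ - β →
      (∑ y : Fin n → B,
          if (n : ℝ) * CΓ + Real.sqrt n * r <
              ∑ i, Real.log (W (x i) (y i) / ∑ a', Pstar a' * W a' (y i))
          then ∏ i, W (x i) (y i) else 0)
        ≤ 4 * νmax / (n * C' ^ 2 * β ^ 2) := by
  refine ⟨⌈(2 * |r| / (C' * β)) ^ 2⌉₊, fun n hn x hx => ?_⟩
  have hn0 : (0 : ℝ) < n := by exact_mod_cast (Nat.zero_le _).trans_lt hn
  set f : Fin n → B → ℝ := fun i b => Real.log (W (x i) b / ∑ a', Pstar a' * W a' b)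
  set M := ∑ i, ∑ b, W (x i) b * f i b
  have hmean : M ≤ n * CΓ - n * (C' * β) :=
    sum_le_of_le_sub_mul_sub hC'.le hn0 (fun i => hKKT (x i)) hx
  have hsqrt : -(n * (C' * β) / 2) ≤ √n * r :=
    neg_mul_div_two_le_sqrt_mul (by positivity) ((Nat.le_ceil _).trans (by exact_mod_cast hn.le))
  set t := n * CΓ + √n * r - M
  have ht : n * (C' * β) / 2 ≤ t := by linarith
  have hvar := sum_prod_mul_sq_sum_sub_mean (fun i => (hW (x i)).2) f
  calc _ ≤ (∑ y : Fin n → B, (∏ i, W (x i) (y i)) * (∑ i, f i (y i) - M) ^ 2) / t ^ 2 :=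
        sum_ite_lt_le_sum_mul_sq_div_sq (fun y => prod_nonneg fun i _ => (hW (x i)).1 _)
          (by linarith [show 0 < n * (C' * β) by positivity])
    _ ≤ (∑ i, ∑ b, W (x i) b * (f i b - ∑ b', W (x i) b' * f i b') ^ 2) /
          (n * (C' * β) / 2) ^ 2 := by
        rw [hvar]
        gcongr
        exact sum_nonneg fun i _ => sum_nonneg fun b _ => mul_nonneg ((hW (x i)).1 b) (sq_nonneg _)
    _ ≤ (∑ _i : Fin n, νmax) / (n * (C' * β) / 2) ^ 2 := by
        gcongr with i
        exact hν (x i)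
    _ = 4 * νmax / (n * C' ^ 2 * β ^ 2) := by
        rw [sum_const, card_univ, Fintype.card_fin, nsmul_eq_mul]
        field_simp
        ring

/-- Chebyshev bound for the information-density sum of a low-cost input sequence:
if `(1/n)·Σᵢ c(xᵢ) ≤ Γ − β` then, for all large `n`,
`P(Σᵢ log(W(Yᵢ|xᵢ)/Q*(Yᵢ)) > n·C(Γ) + √n·r) ≤ 4·ν_max/(n·C'(Γ)²·β²)`,
where `Yᵢ ~ W(·|xᵢ)` are independent and `Q* = P*W`. -/
theorem stmt19 {A B : Type*} [Fintype A] [Fintype B]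
    (W : A → B → ℝ) (hW : ∀ a, (∀ b, 0 ≤ W a b) ∧ ∑ b, W a b = 1)
    (Pstar : A → ℝ) (hP0 : ∀ a, 0 ≤ Pstar a) (hP1 : ∑ a, Pstar a = 1)
    (c : A → ℝ) (cmax : ℝ) (hc : ∀ a, c a ∈ Set.Icc 0 cmax)
    (Γ CΓ C' β νmax : ℝ) (hC' : 0 < C') (hβ : 0 < β)
    (hQpos : ∀ b, 0 < ∑ a, Pstar a * W a b)
    (hKKT : ∀ a, (∑ b, W a b * Real.log (W a b / ∑ a', Pstar a' * W a' b))
        ≤ CΓ - C' * (Γ - c a))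
    (hKKTeq : ∀ a, Pstar a ≠ 0 →
      (∑ b, W a b * Real.log (W a b / ∑ a', Pstar a' * W a' b)) = CΓ - C' * (Γ - c a))
    (hν : ∀ a, (∑ b, W a b *
        (Real.log (W a b / ∑ a', Pstar a' * W a' b) -
          ∑ b', W a b' * Real.log (W a b' / ∑ a', Pstar a' * W a' b')) ^ 2) ≤ νmax)
    (r : ℝ) :
    ∃ N : ℕ, ∀ n : ℕ, N < n → ∀ x : Fin n → A,
      (1 / n : ℝ) * (∑ i, c (x i)) ≤ Γ - β →
      (∑ y : Fin n → B,
          if (n : ℝ) * CΓ + Real.sqrt n * r <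
              ∑ i, Real.log (W (x i) (y i) / ∑ a', Pstar a' * W a' (y i))
          then ∏ i, W (x i) (y i) else 0)
        ≤ 4 * νmax / (n * C' ^ 2 * β ^ 2) :=
  stmt19_general W hW Pstar c Γ CΓ C' β νmax hC' hβ hKKT hν r
end
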